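/- Let 1 ≤ d < D. Then for every p ∈ (0,1) there exists an integer M ≥ 1 such that P_p-almost surely there exists an M-Lipschitz injection from Z^d into the set W_p(Z^D) of open sites of site percolation on Z^D. (Equivalently, p_c(d, D, M) → 0 as M → ∞ whenever M_c(d, D) < ∞.) -/

import Mathlib

open MeasureTheory

/-- The ℓ¹-norm of an integer vector. -/
def norm1 {n : ℕ} (x : Fin n → ℤ) : ℤ := ∑ i, |x i|

/-- `μ` is a product Bernoulli(`p`) measure on site configurations: a probability
measure under which the states of finitely many sites are independent, each site
being open (`true`) with probability `p`. -/
def IsBernoulli {S : Type*} (p : ℝ) (μ : Measure (S → Bool)) : Prop :=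
  IsProbabilityMeasure μ ∧
    ∀ (A : Finset S) (b : S → Bool),
      μ {ω | ∀ s ∈ A, ω s = b s} = ∏ s ∈ A, ENNReal.ofReal (if b s then p else 1 - p)

/-- `f : ℤ^d → ℤ^D` is `M`-Lipschitz: images of ℓ¹-neighbours are at ℓ¹-distance
at most `M`. -/
def IsLip {d D : ℕ} (M : ℕ) (f : (Fin d → ℤ) → (Fin D → ℤ)) : Prop :=
  ∀ x y, norm1 (x - y) = 1 → norm1 (f x - f y) ≤ (M : ℤ)

/-!
Scale by `M = 2m` and attach to each `(x, n) ∈ ℤ^d × ℤ` the vertical column of `M` sites above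
`(M x, M n, 0, …, 0) ∈ ℤ^D`; it is bad when all its sites are closed. A level `n` is drainable at
`x` if one can walk from `(x, n)` to level `0`, dropping one level only out of bad columns and
otherwise stepping to a neighbour of `x` while rising one level. The height
`h x = 1 + sup {drainable levels at x}` is then `1`-Lipschitz and the column at `(x, h x)` is not
bad, so an open site in it gives a `3M`-Lipschitz injection.

The sup is a.s. finite by a Peierls estimate: after loop erasure, a drainage path from level `n`
with `L` steps drops out of `(n + L) / 2` distinct columns, all closed with probability
`(1 - p) ^ (m (n + L))`, and there are `(2d + 1) ^ L` such step sequences. For `m` large this is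
summable in `n`, and Borel–Cantelli applies.
-/

lemma norm1_nonneg {n : ℕ} (v : Fin n → ℤ) : 0 ≤ norm1 v :=
  Finset.sum_nonneg fun i _ => abs_nonneg (v i)

lemma norm1_eq_zero {n : ℕ} {v : Fin n → ℤ} : norm1 v = 0 ↔ v = 0 := by
  simp [norm1, Finset.sum_eq_zero_iff_of_nonneg, funext_iff]

lemma norm1_sub_comm {n : ℕ} (v w : Fin n → ℤ) : norm1 (v - w) = norm1 (w - v) := by
  simp [norm1, abs_sub_comm]

lemma norm1_smul {n : ℕ} (c : ℤ) (v : Fin n → ℤ) : norm1 (c • v) = |c| * norm1 v := by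
  simp [norm1, abs_mul, Finset.mul_sum]

lemma norm1_append {m n : ℕ} (u : Fin m → ℤ) (v : Fin n → ℤ) :
    norm1 (Fin.append u v) = norm1 u + norm1 v := by
  simp [norm1, Fin.sum_univ_add]

lemma norm1_cons {n : ℕ} (t : ℤ) (v : Fin n → ℤ) :
    norm1 (Fin.cons t v : Fin (n + 1) → ℤ) = |t| + norm1 v := by
  simp [norm1, Fin.sum_univ_succ]

lemma exists_eq_single_of_norm1_eq_one {n : ℕ} {v : Fin n → ℤ} (hv : norm1 v = 1) :
    ∃ i, ∃ u : ℤˣ, v = Pi.single i (u : ℤ) := by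
  classical
  have hsum : ∑ j, |v j| = 1 := hv
  obtain ⟨i, -, hi⟩ := Finset.exists_ne_zero_of_sum_ne_zero (hsum ▸ one_ne_zero)
  have hsplit := Finset.add_sum_erase Finset.univ (fun j => |v j|) (Finset.mem_univ i)
  have hrest : 0 ≤ ∑ j ∈ Finset.univ.erase i, |v j| := Finset.sum_nonneg fun j _ => abs_nonneg _
  have hvi : |v i| = 1 := by grind
  have hzero : ∀ j ≠ i, v j = 0 := fun j hj => abs_eq_zero.1 <|
    (Finset.sum_eq_zero_iff_of_nonneg fun j _ => abs_nonneg (v j)).1 (by omega) j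
      (Finset.mem_erase.2 ⟨hj, Finset.mem_univ j⟩)
  refine ⟨i, (Int.isUnit_iff_abs_eq.2 hvi).unit, funext fun j => ?_⟩
  by_cases hj : j = i
  · subst hj; simp
  · simp [hj, hzero j hj]

namespace LipschitzPercolation

variable {d : ℕ}

def AllClosed {S : Type*} (ω : S → Bool) (A : Finset S) : Prop := ∀ z ∈ A, ω z = false

abbrev Cell (d : ℕ) := (Fin d → ℤ) × ℤ

abbrev Move (d : ℕ) := Option (Fin d × ℤˣ)

def step : Move d → Cell d → Cell d
  | none, (x, n) => (x, n - 1)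
  | some (i, u), (x, n) => (x + Pi.single i (u : ℤ), n + 1)

def run (a : Cell d) : List (Move d) → Cell d
  | [] => a
  | o :: l => run (step o a) l

def drops (a : Cell d) : List (Move d) → List (Cell d)
  | [] => []
  | none :: l => a :: drops (step none a) l
  | some e :: l => drops (step (some e) a) l

@[simp] lemma run_nil (a : Cell d) : run a [] = a := rfl
@[simp] lemma run_cons (a : Cell d) (o : Move d) (l : List (Move d)) :
    run a (o :: l) = run (step o a) l := rfl
@[simp] lemma drops_nil (a : Cell d) : drops a [] = [] := rfl
@[simp] lemma drops_cons_none (a : Cell d) (l : List (Move d)) :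
    drops a (none :: l) = a :: drops (step none a) l := rfl
@[simp] lemma drops_cons_some (a : Cell d) (e : Fin d × ℤˣ) (l : List (Move d)) :
    drops a (some e :: l) = drops (step (some e) a) l := rfl

lemma run_append (a : Cell d) (u v : List (Move d)) : run a (u ++ v) = run (run a u) v := by
  induction u generalizing a <;> simp [*]

lemma drops_append (a : Cell d) (u v : List (Move d)) :
    drops a (u ++ v) = drops a u ++ drops (run a u) v := by
  induction u generalizing a with
  | nil => rfl
  | cons o u ih => cases o <;> simp [ih]

lemma length_drops (a : Cell d) (l : List (Move d)) : (drops a l).length = l.count none := by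
  induction l generalizing a with
  | nil => rfl
  | cons o l ih => cases o <;> simp [ih]

lemma run_snd_add (a : Cell d) (l : List (Move d)) :
    (run a l).2 + 2 * l.count none = a.2 + l.length := by
  induction l generalizing a with
  | nil => simp
  | cons o l ih =>
    obtain ⟨x, n⟩ := a
    cases o <;> simp only [run_cons, List.count_cons, List.length_cons] <;> grind [step]

lemma exists_eq_append_of_mem_drops {a b : Cell d} {l : List (Move d)} (h : b ∈ drops a l) :
    ∃ u v, l = u ++ none :: v ∧ run a u = b := by
  induction l generalizing a with
  | nil => simp at h
  | cons o l ih =>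
    cases o with
    | none =>
      rcases List.mem_cons.1 h with rfl | h
      · exact ⟨[], l, rfl, rfl⟩
      · obtain ⟨u, v, rfl, hu⟩ := ih h
        exact ⟨none :: u, v, rfl, hu⟩
    | some e =>
      obtain ⟨u, v, rfl, hu⟩ := ih h
      exact ⟨some e :: u, v, rfl, hu⟩

lemma exists_nodup_drops (a : Cell d) (l : List (Move d)) :
    ∃ l', run a l' = run a l ∧ (drops a l').Nodup ∧ drops a l' ⊆ drops a l := by
  induction l generalizing a with
  | nil => exact ⟨[], rfl, List.nodup_nil, fun _ h => h⟩
  | cons o l ih =>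
    obtain ⟨l', hrun, hnodup, hsub⟩ := ih (step o a)
    cases o with
    | some e => exact ⟨some e :: l', hrun, hnodup, hsub⟩
    | none =>
      by_cases ha : a ∈ drops (step none a) l'
      · -- the path drops at `a` again later: cut out the loop in between
        obtain ⟨u, v, rfl, hu⟩ := exists_eq_append_of_mem_drops ha
        have hsuffix : drops a (none :: v) <:+ drops (step none a) (u ++ none :: v) := by
          rw [drops_append, hu]
          exact List.suffix_append _ _
        refine ⟨none :: v, ?_, hnodup.sublist hsuffix.sublist, ?_⟩
        · rw [run_cons, run_cons, ← hrun, run_append, hu, run_cons]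
        · exact List.Subset.trans hsuffix.subset
            (List.Subset.trans hsub (List.subset_cons_self _ _))
      · exact ⟨none :: l', hrun, List.nodup_cons.2 ⟨ha, hnodup⟩, List.cons_subset_cons _ hsub⟩

section Height

variable (bad : Cell d → Prop)

def IsDrainage (a : Cell d) (l : List (Move d)) : Prop :=
  (run a l).2 = 0 ∧ ∀ b ∈ drops a l, bad b

def drainable (x : Fin d → ℤ) : Set ℕ := {n | ∃ l, IsDrainage bad (x, n) l}

noncomputable def height (x : Fin d → ℤ) : ℕ := sSup (drainable bad x) + 1

variable {bad}

lemma zero_mem_drainable (x : Fin d → ℤ) : 0 ∈ drainable bad x :=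
  ⟨[], rfl, by simp⟩

lemma succ_mem_drainable {x : Fin d → ℤ} {n : ℕ} (hn : n ∈ drainable bad x)
    (hbad : bad (x, (n + 1 : ℕ))) : n + 1 ∈ drainable bad x := by
  obtain ⟨l, hrun, hdrops⟩ := hn
  have hstep : step none (x, ((n + 1 : ℕ) : ℤ)) = (x, (n : ℤ)) := by simp [step]
  refine ⟨none :: l, by rwa [run_cons, hstep], ?_⟩
  rw [drops_cons_none, hstep]
  exact List.forall_mem_cons.2 ⟨hbad, hdrops⟩

lemma mem_drainable_of_succ_mem {x : Fin d → ℤ} {n : ℕ} (i : Fin d) (u : ℤˣ)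
    (hn : n + 1 ∈ drainable bad (x + Pi.single i (u : ℤ))) : n ∈ drainable bad x := by
  obtain ⟨l, hrun, hdrops⟩ := hn
  have hstep : step (some (i, u)) (x, (n : ℤ)) = (x + Pi.single i (u : ℤ), ((n + 1 : ℕ) : ℤ)) := by
    simp [step]
  exact ⟨some (i, u) :: l, by rwa [run_cons, hstep], by rwa [drops_cons_some, hstep]⟩

lemma not_bad_height {x : Fin d → ℤ} (hx : BddAbove (drainable bad x)) :
    ¬ bad (x, (height bad x : ℤ)) := fun hbad =>
  have hmem := succ_mem_drainable (Nat.sSup_mem ⟨0, zero_mem_drainable x⟩ hx) hbad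
  (le_csSup hx hmem).not_gt (Nat.lt_succ_self _)

lemma height_add_single_le {x : Fin d → ℤ} (i : Fin d) (u : ℤˣ) (hx : BddAbove (drainable bad x))
    (hxu : BddAbove (drainable bad (x + Pi.single i (u : ℤ)))) :
    height bad (x + Pi.single i (u : ℤ)) ≤ height bad x + 1 := by
  have hmem := Nat.sSup_mem ⟨0, zero_mem_drainable _⟩ hxu
  unfold height
  obtain h | h := Nat.eq_zero_or_eq_succ_pred (sSup (drainable bad (x + Pi.single i (u : ℤ))))
  · omega
  · rw [h] at hmem ⊢
    exact Nat.add_le_add_right (le_csSup hx (mem_drainable_of_succ_mem i u hmem)) 2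

end Height

section Column

variable {k : ℕ}

def liftPoint (M : ℕ) (x : Fin d → ℤ) (t : ℤ) : Fin (d + (k + 1)) → ℤ :=
  Fin.append ((M : ℤ) • x) (Fin.cons t 0)

noncomputable def column (M : ℕ) (a : Cell d) : Finset (Fin (d + (k + 1)) → ℤ) :=
  (Finset.Ico (M * a.2) (M * a.2 + M)).image (liftPoint M a.1)

lemma liftPoint_sub (M : ℕ) (x y : Fin d → ℤ) (t s : ℤ) :
    liftPoint (k := k) M x t - liftPoint M y s = liftPoint M (x - y) (t - s) := by
  ext i
  refine Fin.addCases (fun i => ?_) (fun i => ?_) i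
  · simp [liftPoint, smul_sub]
  · refine Fin.cases ?_ (fun i => ?_) i <;> simp [liftPoint]

lemma norm1_liftPoint (M : ℕ) (x : Fin d → ℤ) (t : ℤ) :
    norm1 (liftPoint (k := k) M x t) = M * norm1 x + |t| := by
  rw [liftPoint, norm1_append, norm1_cons, norm1_smul, norm1_eq_zero.2 rfl, Nat.abs_cast]
  ring

lemma norm1_liftPoint_sub (M : ℕ) (x y : Fin d → ℤ) (t s : ℤ) :
    norm1 (liftPoint (k := k) M x t - liftPoint M y s) = M * norm1 (x - y) + |t - s| := by
  rw [liftPoint_sub, norm1_liftPoint]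

lemma liftPoint_inj {M : ℕ} (hM : 0 < M) {x y : Fin d → ℤ} {t s : ℤ} :
    liftPoint (k := k) M x t = liftPoint M y s ↔ x = y ∧ t = s := by
  refine ⟨fun h => ?_, fun h => h.1 ▸ h.2 ▸ rfl⟩
  have h0 := norm1_liftPoint_sub (k := k) M x y t s
  rw [h, sub_self, norm1_eq_zero.2 rfl, eq_comm,
    add_eq_zero_iff_of_nonneg (by positivity [norm1_nonneg (x - y)]) (abs_nonneg _)] at h0
  simpa [hM.ne', norm1_eq_zero, sub_eq_zero] using h0

lemma card_column {M : ℕ} (hM : 0 < M) (a : Cell d) : (column (k := k) M a).card = M := by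
  rw [column, Finset.card_image_of_injective _ fun t s h => ((liftPoint_inj hM).1 h).2,
    Int.card_Ico]
  omega

lemma pairwise_disjoint_column {M : ℕ} (hM : 0 < M) :
    Pairwise (Function.onFun Disjoint (column (k := k) (d := d) M)) := by
  intro a b hab
  rw [Function.onFun, Finset.disjoint_left]
  intro z hza hzb
  obtain ⟨t, ht, rfl⟩ := Finset.mem_image.1 hza
  obtain ⟨s, hs, hst⟩ := Finset.mem_image.1 hzb
  obtain ⟨hx, rfl⟩ := (liftPoint_inj hM).1 hst
  rw [Finset.mem_Ico] at ht hs
  have hM' : (0 : ℤ) < M := by exact_mod_cast hM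
  have hab' : a.2 < b.2 + 1 := lt_of_mul_lt_mul_left (by linarith) hM'.le
  have hba : b.2 < a.2 + 1 := lt_of_mul_lt_mul_left (by linarith) hM'.le
  exact hab (Prod.ext hx.symm (by omega))

theorem exists_injective_isLip_of_bddAbove {M : ℕ} {ω : (Fin (d + (k + 1)) → ℤ) → Bool}
    (hbdd : ∀ x, BddAbove (drainable (fun a => AllClosed ω (column M a)) x)) :
    ∃ f : (Fin d → ℤ) → (Fin (d + (k + 1)) → ℤ),
      Function.Injective f ∧ IsLip (3 * M) f ∧ ∀ x, ω (f x) = true := by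
  set H := height fun a : Cell d => AllClosed ω (column M a)
  have hopen : ∀ x, ∃ t ∈ Finset.Ico (M * (H x : ℤ)) (M * H x + M),
      ω (liftPoint M x t) = true := by
    intro x
    have h : ¬ AllClosed ω (column M (x, (H x : ℤ))) := not_bad_height (hbdd x)
    simp only [AllClosed, not_forall, Bool.not_eq_false, exists_prop] at h
    obtain ⟨z, hz, hωz⟩ := h
    obtain ⟨t, ht, rfl⟩ := Finset.mem_image.1 hz
    exact ⟨t, ht, hωz⟩
  choose t ht hωt using hopen
  have hM : 0 < M := by
    have := Finset.mem_Ico.1 (ht 0)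
    exact_mod_cast (show (0 : ℤ) < M by linarith)
  have hH : ∀ x y, norm1 (x - y) = 1 → M * (H x : ℤ) ≤ M * H y + M := by
    intro x y hxy
    obtain ⟨i, u, hxy⟩ := exists_eq_single_of_norm1_eq_one hxy
    obtain rfl : x = y + Pi.single i (u : ℤ) := by rw [← hxy]; abel
    exact_mod_cast Nat.mul_le_mul_left M (height_add_single_le i u (hbdd y) (hbdd _))
  refine ⟨fun x => liftPoint M x (t x), fun x y h => ((liftPoint_inj hM).1 h).1,
    fun x y hxy => ?_, hωt⟩
  have hxy' := hH x y hxy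
  have hyx' := hH y x (norm1_sub_comm x y ▸ hxy)
  have htx := Finset.mem_Ico.1 (ht x)
  have hty := Finset.mem_Ico.1 (ht y)
  have hdist : |t x - t y| ≤ 2 * M := abs_sub_le_iff.2 ⟨by linarith, by linarith⟩
  rw [norm1_liftPoint_sub, hxy]
  push_cast
  linarith

end Column

section Peierls

open scoped ENNReal

lemma tsum_pow_length (α : Type*) [Fintype α] (c : ℝ≥0∞) :
    ∑' l : List α, c ^ l.length = (1 - Fintype.card α * c)⁻¹ := by
  rw [← ENNReal.tsum_geometric, ← List.equivSigmaTuple.symm.tsum_eq, ENNReal.tsum_sigma']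
  simp [tsum_fintype, mul_pow]

variable {S : Type*} {p : ℝ} {μ : Measure (S → Bool)}

lemma measure_allClosed (hμ : IsBernoulli p μ) (A : Finset S) :
    μ {ω | AllClosed ω A} = ENNReal.ofReal (1 - p) ^ A.card := by
  simpa [AllClosed] using hμ.2 A fun _ => false

variable {m : ℕ} {block : Cell d → Finset S}

lemma measure_isDrainage_nodup_le (hμ : IsBernoulli p μ) (hdisj : Pairwise (Function.onFun Disjoint block))
    (hcard : ∀ a, (block a).card = 2 * m) (x : Fin d → ℤ) (n : ℕ) (l : List (Move d)) :
    μ {ω | IsDrainage (fun a => AllClosed ω (block a)) (x, (n : ℤ)) l ∧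
        (drops (x, (n : ℤ)) l).Nodup} ≤ (ENNReal.ofReal (1 - p) ^ m) ^ (n + l.length) := by
  classical
  by_cases hpath : (run (x, (n : ℤ)) l).2 = 0 ∧ (drops (x, (n : ℤ)) l).Nodup
  · obtain ⟨hrun, hnodup⟩ := hpath
    set U := (drops (x, (n : ℤ)) l).toFinset.biUnion block
    have hsub : {ω | IsDrainage (fun a => AllClosed ω (block a)) (x, (n : ℤ)) l ∧
        (drops (x, (n : ℤ)) l).Nodup} ⊆ {ω | AllClosed ω U} := by
      intro ω hω z hz
      obtain ⟨a, ha, hz⟩ := Finset.mem_biUnion.1 hz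
      exact hω.1.2 a (List.mem_toFinset.1 ha) z hz
    have hcount : 2 * l.count none = n + l.length := by
      have := run_snd_add (x, (n : ℤ)) l
      rw [hrun] at this
      omega
    have hU : U.card = m * (n + l.length) := by
      rw [Finset.card_biUnion fun a _ b _ hab => hdisj hab, Finset.sum_congr rfl fun a _ => hcard a,
        Finset.sum_const, List.toFinset_card_of_nodup hnodup, length_drops, smul_eq_mul, ← hcount]
      ring
    calc _ ≤ μ {ω | AllClosed ω U} := measure_mono hsub
      _ = _ := by rw [measure_allClosed hμ, hU, pow_mul]
  · exact (measure_mono_null (t := ∅) (fun ω hω => hpath ⟨hω.1.1, hω.2⟩) measure_empty).le.trans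
      zero_le

lemma measure_mem_drainable_le (hμ : IsBernoulli p μ)
    (hdisj : Pairwise (Function.onFun Disjoint block)) (hcard : ∀ a, (block a).card = 2 * m)
    (x : Fin d → ℤ) (n : ℕ) :
    μ {ω | n ∈ drainable (fun a => AllClosed ω (block a)) x} ≤
      (ENNReal.ofReal (1 - p) ^ m) ^ n *
        (1 - Fintype.card (Move d) * ENNReal.ofReal (1 - p) ^ m)⁻¹ := by
  calc _ ≤ μ (⋃ l : List (Move d), {ω | IsDrainage (fun a => AllClosed ω (block a)) (x, (n : ℤ)) l ∧
          (drops (x, (n : ℤ)) l).Nodup}) := by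
        refine measure_mono fun ω ⟨l, hrun, hclosed⟩ => ?_
        obtain ⟨l', hrun', hnodup, hsub⟩ := exists_nodup_drops (x, (n : ℤ)) l
        exact Set.mem_iUnion.2 ⟨l', ⟨by rwa [hrun'], fun a ha => hclosed a (hsub ha)⟩, hnodup⟩
    _ ≤ ∑' l : List (Move d), (ENNReal.ofReal (1 - p) ^ m) ^ (n + l.length) :=
        (measure_iUnion_le _).trans
          (ENNReal.tsum_le_tsum fun l => measure_isDrainage_nodup_le hμ hdisj hcard x n l)
    _ = _ := by simp_rw [pow_add]; rw [ENNReal.tsum_mul_left, tsum_pow_length]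

lemma ae_bddAbove_drainable (hμ : IsBernoulli p μ)
    (hdisj : Pairwise (Function.onFun Disjoint block)) (hcard : ∀ a, (block a).card = 2 * m)
    (hsmall : Fintype.card (Move d) * ENNReal.ofReal (1 - p) ^ m < 1) (x : Fin d → ℤ) :
    ∀ᵐ ω ∂μ, BddAbove (drainable (fun a => AllClosed ω (block a)) x) := by
  have hr : ENNReal.ofReal (1 - p) ^ m < 1 :=
    (le_mul_of_one_le_left' (by exact_mod_cast Fintype.card_pos)).trans_lt hsmall
  have hsum : ∑' n : ℕ, μ {ω | n ∈ drainable (fun a => AllClosed ω (block a)) x} ≠ ∞ := by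
    refine ne_top_of_le_ne_top ?_
      (ENNReal.tsum_le_tsum (measure_mem_drainable_le hμ hdisj hcard x))
    rw [ENNReal.tsum_mul_right, ENNReal.tsum_geometric]
    exact ENNReal.mul_ne_top (ENNReal.inv_ne_top.2 (tsub_pos_of_lt hr).ne')
      (ENNReal.inv_ne_top.2 (tsub_pos_of_lt hsmall).ne')
  filter_upwards [ae_eventually_notMem hsum] with ω hω
  obtain ⟨N, hN⟩ := Filter.eventually_atTop.1 hω
  exact ⟨N, fun n hn => not_lt.1 fun hlt => hN n hlt.le hn⟩

end Peierls

end LipschitzPercolation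

open LipschitzPercolation in
theorem lipschitz_injection_for_large_M_general (d D : ℕ) (hdD : d < D)
    (p : ℝ) (hp0 : 0 < p) :
    ∃ M : ℕ, 1 ≤ M ∧
      ∀ μ : Measure ((Fin D → ℤ) → Bool), IsBernoulli p μ →
        ∀ᵐ ω ∂μ, ∃ f : (Fin d → ℤ) → (Fin D → ℤ),
          Function.Injective f ∧ IsLip M f ∧ ∀ x, ω (f x) = true := by
  obtain ⟨k, rfl⟩ : ∃ k, D = d + (k + 1) := ⟨D - d - 1, by omega⟩
  have hq : ENNReal.ofReal (1 - p) < 1 := ENNReal.ofReal_lt_one.2 (by linarith)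
  have hlim := ENNReal.Tendsto.const_mul (ENNReal.tendsto_pow_atTop_nhds_zero_of_lt_one hq)
    (Or.inr (ENNReal.natCast_ne_top (Fintype.card (Move d))))
  rw [mul_zero] at hlim
  obtain ⟨m, hsmall, hm⟩ := ((hlim.eventually (gt_mem_nhds zero_lt_one)).and
    (Filter.eventually_ge_atTop 1)).exists
  refine ⟨3 * (2 * m), by omega, fun μ hμ => ?_⟩
  filter_upwards [ae_all_iff.2 fun x => ae_bddAbove_drainable hμ
    (pairwise_disjoint_column (by omega)) (card_column (by omega)) hsmall x] with ω hω
  exact exists_injective_isLip_of_bddAbove hω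

/-- For `1 ≤ d < D` and every `p ∈ (0,1)` there exists `M ≥ 1` such that
`P_p`-a.s. there is an `M`-Lipschitz injection from `ℤ^d` into the open sites
of `ℤ^D`. -/
theorem lipschitz_injection_for_large_M (d D : ℕ) (hd : 1 ≤ d) (hdD : d < D)
    (p : ℝ) (hp0 : 0 < p) (hp1 : p < 1) :
    ∃ M : ℕ, 1 ≤ M ∧
      ∀ μ : Measure ((Fin D → ℤ) → Bool), IsBernoulli p μ →
        ∀ᵐ ω ∂μ, ∃ f : (Fin d → ℤ) → (Fin D → ℤ),
          Function.Injective f ∧ IsLip M f ∧ ∀ x, ω (f x) = true :=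
  lipschitz_injection_for_large_M_general d D hdD p hp0
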